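/- Let 1 < k < n and let G be a simple graph of order n with q_{k+1}(G) = n − 2. Then 0 is an eigenvalue of the signless Laplacian of the complement of G with multiplicity at least k; consequently the complement of G has at least k bipartite components. -/

import Mathlib

open Matrix SimpleGraph
open scoped Classical

/-- The `k`-th largest eigenvalue (1-indexed, counted with multiplicity) of a real
symmetric (Hermitian) matrix; junk value `0` if `M` is not Hermitian or `k` is out of range. -/
noncomputable def kthEig {V : Type*} [Fintype V] [DecidableEq V]
    (M : Matrix V V ℝ) (k : ℕ) : ℝ :=
  if hM : M.IsHermitian then
    if h : k - 1 < Fintype.card V then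
      letI f : Fin (Fintype.card V) → ℝ := hM.eigenvalues ∘ (Fintype.equivFin V).symm
      (f ∘ Tuple.sort f) (Fin.rev ⟨k - 1, h⟩)
    else 0
  else 0

/-- The signless Laplacian `Q(G) = D(G) + A(G)` of a simple graph `G`. -/
noncomputable def signlessLap {V : Type*} [Fintype V] [DecidableEq V]
    (G : SimpleGraph V) [DecidableRel G.Adj] : Matrix V V ℝ :=
  G.degMatrix ℝ + G.adjMatrix ℝ

/-- `qEig G k` is the `k`-th largest signless Laplacian eigenvalue `q_k(G)`. -/
noncomputable def qEig {V : Type*} [Fintype V] [DecidableEq V]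
    (G : SimpleGraph V) [DecidableRel G.Adj] (k : ℕ) : ℝ :=
  kthEig (signlessLap G) k

/-- `c` is a bipartite connected component of `H`: the vertex set of the component splits
into two disjoint classes `U`, `W` such that every edge of the component joins `U` and `W`. -/
def IsBipartiteComponent {V : Type*} (H : SimpleGraph V) (c : H.ConnectedComponent) : Prop :=
  ∃ U W : Set V, U ∪ W = c.supp ∧ Disjoint U W ∧
    ∀ ⦃u v : V⦄, u ∈ c.supp → H.Adj u v → (u ∈ U ∧ v ∈ W) ∨ (u ∈ W ∧ v ∈ U)

/-- `c` is a balanced bipartite connected component of `H`: bipartite with vertex classes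
of equal size. -/
def IsBalancedBipartiteComponent {V : Type*} (H : SimpleGraph V)
    (c : H.ConnectedComponent) : Prop :=
  ∃ U W : Set V, U ∪ W = c.supp ∧ Disjoint U W ∧ U.ncard = W.ncard ∧
    ∀ ⦃u v : V⦄, u ∈ c.supp → H.Adj u v → (u ∈ U ∧ v ∈ W) ∨ (u ∈ W ∧ v ∈ U)

/-- `G` is the complete multipartite graph whose parts are the fibers of `p`:
two vertices are adjacent iff they lie in different parts. -/
def IsCompleteMultipartiteWith {V ι : Type*} (G : SimpleGraph V) (p : V → ι) : Prop :=
  ∀ u v : V, G.Adj u v ↔ p u ≠ p v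

/-!
`Q(G) + Q(Ḡ) = (n - 2) I + J`. The eigenvectors of `Q(G)` for its `k + 1` largest eigenvalues span
a `(k + 1)`-dimensional space on which `xᵀ Q(G) x ≥ q_{k+1}(G) ‖x‖² = (n - 2) ‖x‖²`. On its
intersection with the hyperplane `∑ xᵢ = 0`, of dimension at least `k`, this gives
`xᵀ Q(Ḡ) x ≤ 0`, so the positive semidefinite `Q(Ḡ)` kills it.

A vector `x` with `Q(H) x = 0` satisfies `x u = -x v` on every edge `uv`, so `|x|` is constant on
each component and a component where `x ≠ 0` is bipartite (split by the sign of `x`). Evaluating at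
one vertex per bipartite component is therefore injective on `ker Q(H)`.
-/

theorem Submodule.finrank_le_finrank_inf_ker_add_one {K E : Type*} [Field K] [AddCommGroup E]
    [Module K E] [FiniteDimensional K E] (S : Submodule K E) (f : E →ₗ[K] K) :
    Module.finrank K S ≤ Module.finrank K ↥(S ⊓ LinearMap.ker f) + 1 := by
  have hsup := Submodule.finrank_sup_add_finrank_inf_eq S (LinearMap.ker f)
  have hle := Submodule.finrank_le (S ⊔ LinearMap.ker f)
  have hrank := LinearMap.finrank_range_add_finrank_ker f
  have hrange := (Submodule.finrank_le (LinearMap.range f)).trans (Module.finrank_self K).le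
  omega

namespace Matrix.IsHermitian

open Finset Submodule
open scoped InnerProductSpace

variable {V : Type*} [Fintype V] [DecidableEq V] {M : Matrix V V ℝ}

theorem inner_toEuclideanLin_self_eq_sum (hM : M.IsHermitian) (y : EuclideanSpace ℝ V) :
    ⟪y, toEuclideanLin M y⟫_ℝ = ∑ i, hM.eigenvalues i * ⟪hM.eigenvectorBasis i, y⟫_ℝ ^ 2 := by
  rw [← hM.eigenvectorBasis.sum_inner_mul_inner]
  refine sum_congr rfl fun i _ ↦ ?_
  have hb : toEuclideanLin M (hM.eigenvectorBasis i) =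
      hM.eigenvalues i • hM.eigenvectorBasis i := by
    apply WithLp.ofLp_injective
    simpa using hM.mulVec_eigenvectorBasis i
  rw [← (isSymmetric_toEuclideanLin_iff.mpr hM), hb, real_inner_smul_left, real_inner_comm]
  ring

theorem mul_inner_self_le_inner_toEuclideanLin (hM : M.IsHermitian) {r : ℝ} {s : Finset V}
    (hs : ∀ i ∈ s, r ≤ hM.eigenvalues i) {y : EuclideanSpace ℝ V}
    (hy : y ∈ span ℝ (hM.eigenvectorBasis '' s)) :
    r * ⟪y, y⟫_ℝ ≤ ⟪y, toEuclideanLin M y⟫_ℝ := by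
  set b := hM.eigenvectorBasis
  have hcoeff {i : V} (hi : i ∉ s) : ⟪b i, y⟫_ℝ = 0 := by
    rw [← b.repr_apply_apply, ← b.coe_toBasis_repr_apply, ← Finsupp.notMem_support_iff]
    rw [← b.coe_toBasis, Module.Basis.mem_span_image] at hy
    exact fun h ↦ hi (hy h)
  rw [hM.inner_toEuclideanLin_self_eq_sum, ← b.sum_inner_mul_inner y y, mul_sum]
  refine sum_le_sum fun i _ ↦ ?_
  rw [real_inner_comm (b i) y, ← sq]
  by_cases hi : i ∈ s
  · exact mul_le_mul_of_nonneg_right (hs i hi) (sq_nonneg _)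
  · rw [hcoeff hi]; simp

theorem exists_card_eq_forall_kthEig_le (hM : M.IsHermitian) {k : ℕ} (hk₀ : 0 < k)
    (hk : k ≤ Fintype.card V) :
    ∃ s : Finset V, s.card = k ∧ ∀ i ∈ s, kthEig M k ≤ hM.eigenvalues i := by
  set e := (Fintype.equivFin V).symm
  set f := hM.eigenvalues ∘ e
  set a : Fin (Fintype.card V) := Fin.rev ⟨k - 1, by omega⟩ with ha
  have hval : kthEig M k = f (Tuple.sort f a) := by
    rw [kthEig, dif_pos hM, dif_pos (by omega)]
    rfl
  -- `Tuple.sort f` lists the eigenvalues in increasing order, so the `k` largest ones sit at the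
  -- positions `≥ a`.
  refine ⟨(Ici a).map ((Tuple.sort f).toEmbedding.trans e.toEmbedding), ?_, ?_⟩
  · simp only [card_map, Fin.card_Ici, ha, Fin.val_rev]
    omega
  · simp only [Finset.mem_map, mem_Ici]
    rintro _ ⟨j, hj, rfl⟩
    exact hval ▸ Tuple.monotone_sort f hj

theorem exists_finrank_eq_forall_kthEig_mul_le (hM : M.IsHermitian) {k : ℕ} (hk₀ : 0 < k)
    (hk : k ≤ Fintype.card V) :
    ∃ S : Submodule ℝ (V → ℝ), Module.finrank ℝ S = k ∧
      ∀ x ∈ S, kthEig M k * (x ⬝ᵥ x) ≤ x ⬝ᵥ (M *ᵥ x) := by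
  obtain ⟨s, hcard, hs⟩ := hM.exists_card_eq_forall_kthEig_le hk₀ hk
  set b := hM.eigenvectorBasis
  refine ⟨(span ℝ (b '' s)).map (WithLp.linearEquiv 2 ℝ (V → ℝ)).toLinearMap, ?_, ?_⟩
  · rw [LinearEquiv.finrank_map_eq, Set.image_eq_range, ← hcard, ← Fintype.card_coe]
    exact finrank_span_eq_card (b.orthonormal.linearIndependent.comp _ Subtype.val_injective)
  · rintro _ ⟨y, hy, rfl⟩
    simpa only [EuclideanSpace.inner_eq_star_dotProduct, star_trivial, LinearEquiv.coe_coe,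
      WithLp.coe_linearEquiv, ofLp_toLpLin, toLin'_apply, dotProduct_comm (M *ᵥ _)] using
      hM.mul_inner_self_le_inner_toEuclideanLin hs hy

end Matrix.IsHermitian

namespace SimpleGraph

open Finset

variable {V : Type*} [Fintype V] [DecidableEq V] (G : SimpleGraph V) [DecidableRel G.Adj]

theorem isHermitian_signlessLap : (signlessLap G).IsHermitian := by
  rw [IsHermitian, conjTranspose_eq_transpose_of_trivial]
  exact (G.isSymm_degMatrix ℝ).add G.isSymm_adjMatrix

theorem dotProduct_mulVec_signlessLap (x : V → ℝ) :
    x ⬝ᵥ (signlessLap G *ᵥ x) =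
      (∑ i : V, ∑ j : V, if G.Adj i j then (x i + x j) ^ 2 else 0) / 2 := by
  simp_rw [signlessLap, add_mulVec, dotProduct_add, dotProduct_mulVec_degMatrix,
    dotProduct_mulVec_adjMatrix, ← sum_add_distrib, degree_eq_sum_if_adj, sum_mul, ite_mul,
    one_mul, zero_mul, ← sum_add_distrib, ite_add_ite, add_zero]
  rw [← add_self_div_two (∑ i : V, ∑ j : V, _)]
  conv_lhs => enter [1, 2, 2, i, 2, j]; rw [if_congr (G.adj_comm i j) rfl rfl]
  conv_lhs => enter [1, 2]; rw [sum_comm]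
  simp_rw [← sum_add_distrib, ite_add_ite]
  congr 2 with i
  congr 2 with j
  ring_nf

theorem posSemidef_signlessLap : (signlessLap G).PosSemidef := by
  refine .of_dotProduct_mulVec_nonneg G.isHermitian_signlessLap fun x ↦ ?_
  rw [star_trivial, dotProduct_mulVec_signlessLap]
  positivity

theorem dotProduct_mulVec_signlessLap_eq_zero_iff (x : V → ℝ) :
    x ⬝ᵥ (signlessLap G *ᵥ x) = 0 ↔ ∀ i j : V, G.Adj i j → x i + x j = 0 := by
  simp (disch := intros; positivity)
    [dotProduct_mulVec_signlessLap, sum_eq_zero_iff_of_nonneg]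

theorem signlessLap_mulVec_eq_zero_iff {x : V → ℝ} :
    signlessLap G *ᵥ x = 0 ↔ ∀ i j : V, G.Adj i j → x i + x j = 0 := by
  rw [← G.posSemidef_signlessLap.dotProduct_mulVec_zero_iff, star_trivial,
    dotProduct_mulVec_signlessLap_eq_zero_iff]

theorem signlessLap_add_signlessLap_compl :
    signlessLap G + signlessLap Gᶜ = ((Fintype.card V : ℝ) - 2) • (1 : Matrix V V ℝ) + of 1 := by
  have hdeg : G.degMatrix ℝ + Gᶜ.degMatrix ℝ = ((Fintype.card V : ℝ) - 1) • 1 := by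
    rw [degMatrix, degMatrix, diagonal_add, ← diagonal_one, ← diagonal_smul]
    congr 1 with v
    have hlt : 1 + G.degree v ≤ Fintype.card V := by have := G.degree_lt_card_verts v; omega
    simp only [Pi.smul_apply, smul_eq_mul, mul_one, degree_compl, Nat.sub_sub]
    push_cast [hlt]
    ring
  have hadj : G.adjMatrix ℝ + Gᶜ.adjMatrix ℝ = of 1 - 1 := by
    rw [isCompl_compl.adjMatrix_add_adjMatrix_eq_adjMatrix_completeGraph ℝ,
      adjMatrix_completeGraph_eq_of_one_sub_one]
  rw [signlessLap, signlessLap, add_add_add_comm, hdeg, hadj]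
  module

theorem dotProduct_mulVec_signlessLap_add_dotProduct_mulVec_signlessLap_compl (x : V → ℝ) :
    x ⬝ᵥ (signlessLap G *ᵥ x) + x ⬝ᵥ (signlessLap Gᶜ *ᵥ x) =
      ((Fintype.card V : ℝ) - 2) * (x ⬝ᵥ x) + (∑ i, x i) ^ 2 := by
  have hJ : (of 1 : Matrix V V ℝ) *ᵥ x = fun _ ↦ ∑ i, x i := by
    ext; simp [mulVec, dotProduct]
  rw [← dotProduct_add, ← add_mulVec, signlessLap_add_signlessLap_compl, add_mulVec, smul_mulVec,
    one_mulVec, hJ, dotProduct_add, dotProduct_smul, smul_eq_mul, sq]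
  simp only [dotProduct, ← sum_mul]

theorem signlessLap_compl_mulVec_eq_zero {x : V → ℝ}
    (hx : ((Fintype.card V : ℝ) - 2) * (x ⬝ᵥ x) ≤ x ⬝ᵥ (signlessLap G *ᵥ x))
    (hsum : ∑ i, x i = 0) : signlessLap Gᶜ *ᵥ x = 0 := by
  have hle : x ⬝ᵥ (signlessLap Gᶜ *ᵥ x) ≤ 0 := by
    linarith [G.dotProduct_mulVec_signlessLap_add_dotProduct_mulVec_signlessLap_compl x,
      sq_eq_zero_iff.mpr hsum]
  rw [← Gᶜ.posSemidef_signlessLap.dotProduct_mulVec_zero_iff, star_trivial]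
  exact le_antisymm hle (by simpa using Gᶜ.posSemidef_signlessLap.dotProduct_mulVec_nonneg x)

section Bipartite

variable {W : Type*} {H : SimpleGraph W} {x : W → ℝ}

theorem abs_eq_of_reachable (hx : ∀ i j, H.Adj i j → x i + x j = 0) {u v : W}
    (h : H.Reachable u v) : |x u| = |x v| := by
  obtain ⟨p⟩ := h
  induction p with
  | nil => rfl
  | @cons a b _ hab _ ih => rw [← ih, eq_neg_of_add_eq_zero_right (hx a b hab), abs_neg]

theorem isBipartiteComponent_of_ne_zero (hx : ∀ i j, H.Adj i j → x i + x j = 0) {u : W}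
    (hu : x u ≠ 0) : IsBipartiteComponent H (H.connectedComponentMk u) := by
  set c := H.connectedComponentMk u
  have hne {w : W} (hw : w ∈ c.supp) : x w ≠ 0 := by
    rw [← abs_ne_zero, abs_eq_of_reachable hx (ConnectedComponent.exact hw), abs_ne_zero]
    exact hu
  refine ⟨c.supp ∩ {w | 0 < x w}, c.supp ∩ {w | x w < 0}, ?_, ?_, ?_⟩
  · rw [← Set.inter_union_distrib_left, Set.inter_eq_left]
    exact fun w hw ↦ (hne hw).symm.lt_or_gt
  · exact Set.disjoint_left.mpr fun w hp hn ↦ lt_asymm (α := ℝ) hp.2 hn.2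
  · intro a b ha hab
    have hb : b ∈ c.supp := (ConnectedComponent.connectedComponentMk_eq_of_adj hab).symm.trans ha
    have hxb : x b = -x a := eq_neg_of_add_eq_zero_right (hx a b hab)
    rcases (hne ha).lt_or_gt with h | h
    · exact Or.inr ⟨⟨ha, h⟩, hb, show 0 < x b by linarith⟩
    · exact Or.inl ⟨⟨ha, h⟩, hb, show x b < 0 by linarith⟩

end Bipartite

theorem finrank_ker_signlessLap_le_ncard_isBipartiteComponent :
    Module.finrank ℝ (LinearMap.ker (toLin' (signlessLap G))) ≤
      {c : G.ConnectedComponent | IsBipartiteComponent G c}.ncard := by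
  set C := {c : G.ConnectedComponent | IsBipartiteComponent G c}
  set K := LinearMap.ker (toLin' (signlessLap G))
  let evalAtReps : K →ₗ[ℝ] C → ℝ :=
    LinearMap.pi fun c ↦ (LinearMap.proj c.1.out).comp K.subtype
  have hinj : Function.Injective evalAtReps := by
    rw [← LinearMap.ker_eq_bot, LinearMap.ker_eq_bot']
    intro x hx
    have hadj := G.signlessLap_mulVec_eq_zero_iff.mp (LinearMap.mem_ker.mp x.2)
    ext u
    by_contra hu
    have hbip := isBipartiteComponent_of_ne_zero hadj hu
    have hout : G.Reachable u (G.connectedComponentMk u).out :=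
      ConnectedComponent.exact (Quot.out_eq _).symm
    have hzero : (x : V → ℝ) (G.connectedComponentMk u).out = 0 :=
      congrFun hx ⟨_, hbip⟩
    exact hu (abs_eq_zero.mp ((abs_eq_of_reachable hadj hout).trans (by rw [hzero, abs_zero])))
  calc Module.finrank ℝ K ≤ Module.finrank ℝ (C → ℝ) :=
        LinearMap.finrank_le_finrank_of_injective hinj
    _ = C.ncard := by
        rw [Module.finrank_fintype_fun_eq_card, ← Nat.card_eq_fintype_card, Nat.card_coe_set_eq]

end SimpleGraph

/-- Let `1 < k < n` and let `G` be a graph of order `n` with `q_{k+1}(G) = n - 2`. Then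
`0` is an eigenvalue of `Q(Ḡ)` with multiplicity at least `k`; consequently the complement
of `G` has at least `k` bipartite components. -/
theorem zero_multiplicity_of_qk_succ (n k : ℕ) (hk1 : 1 < k) (hkn : k < n)
    (G : SimpleGraph (Fin n)) [DecidableRel G.Adj]
    (h : qEig G (k + 1) = (n : ℝ) - 2) :
    Module.End.HasEigenvalue (Matrix.toLin' (signlessLap Gᶜ)) 0 ∧
    k ≤ Module.finrank ℝ (Module.End.eigenspace (Matrix.toLin' (signlessLap Gᶜ)) 0) ∧
    k ≤ {c : Gᶜ.ConnectedComponent | IsBipartiteComponent Gᶜ c}.ncard := by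
  obtain ⟨S, hSrank, hS⟩ := G.isHermitian_signlessLap.exists_finrank_eq_forall_kthEig_mul_le
    (k := k + 1) (by omega) (by simpa using hkn)
  set sumCoords : (Fin n → ℝ) →ₗ[ℝ] ℝ := ∑ i, LinearMap.proj i
  have hsub : S ⊓ LinearMap.ker sumCoords ≤ LinearMap.ker (toLin' (signlessLap Gᶜ)) := by
    rintro x ⟨hxS, hxsum⟩
    have hsum : ∑ i, x i = 0 := by simpa [sumCoords] using hxsum
    refine LinearMap.mem_ker.mpr (G.signlessLap_compl_mulVec_eq_zero ?_ hsum)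
    rw [Fintype.card_fin, ← h]
    exact hS x hxS
  have hker : k ≤ Module.finrank ℝ (LinearMap.ker (toLin' (signlessLap Gᶜ))) := by
    have hcodim := S.finrank_le_finrank_inf_ker_add_one sumCoords
    have hmono := Submodule.finrank_mono hsub
    omega
  have hker_ne_bot : LinearMap.ker (toLin' (signlessLap Gᶜ)) ≠ ⊥ := fun hbot ↦ by
    rw [hbot, finrank_bot] at hker
    omega
  rw [Module.End.hasEigenvalue_iff, Module.End.eigenspace_zero]
  exact ⟨hker_ne_bot, hker, hker.trans Gᶜ.finrank_ker_signlessLap_le_ncard_isBipartiteComponent⟩
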